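/- arXiv:1411.4481 — 2 statements merged into one kernel-verified Lean document; each statement's English description precedes it below -/
import Mathlib

section
/- For all ordinals α, β < ε_{Ω+1}, one has ϑ(α) < ϑ(β) if and only if either (α < β and k(α) < ϑ(β)) or (β < α and ϑ(α) ≤ k(β)). -/
/-- `Ω`, the first uncountable ordinal `ω₁`. -/
noncomputable def Omega1 : Ordinal.{0} := (Cardinal.aleph 1).ord

/-- `KMem β α` expresses `β ∈ K(α)`, where `K(0) = {0}` and, for
`α = Ω^{α₁}·β₁ + … + Ω^{αₙ}·βₙ` in base-`Ω` Cantor normal form,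
`K(α) = {β₁,…,βₙ} ∪ K(α₁) ∪ … ∪ K(αₙ)`. -/
inductive KMem : Ordinal.{0} → Ordinal.{0} → Prop
  | zero : KMem 0 0
  | coeff {α e c : Ordinal.{0}} : (e, c) ∈ Ordinal.CNF Omega1 α → KMem c α
  | expo {α e c β : Ordinal.{0}} : (e, c) ∈ Ordinal.CNF Omega1 α → KMem β e → KMem β α

/-- `k(α) = max K(α)` (as a supremum; `K(α)` is finite for `α < ε_{Ω+1}`). -/
noncomputable def kMax (α : Ordinal.{0}) : Ordinal.{0} := sSup {β | KMem β α}

/-- Membership in `P`, the class of additively closed ordinals `{ω^ξ : ξ ∈ On}`. -/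
def AddClosed (ζ : Ordinal.{0}) : Prop := ∃ ξ : Ordinal.{0}, ζ = Ordinal.omega0 ^ ξ

/-- The collapsing function `ϑ`: `ϑ(α)` is the least `ζ ∈ P` such that `k(α) < ζ` and
for all `β < α` with `k(β) < ζ` one has `ϑ(β) < ζ`. -/
noncomputable def theta : Ordinal.{0} → Ordinal.{0} :=
  Ordinal.lt_wf.fix (C := fun _ => Ordinal.{0}) fun α IH =>
    sInf {ζ : Ordinal.{0} | AddClosed ζ ∧ kMax α < ζ ∧
      ∀ (β : Ordinal.{0}) (h : β < α), kMax β < ζ → IH β h < ζ}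

/-- `ε_{Ω+1}`, the least epsilon number above `Ω`. -/
noncomputable def epsOmega1 : Ordinal.{0} :=
  Ordinal.nfp (fun a => Ordinal.omega0 ^ a) (Omega1 + 1)

/-- The tower `Ω_n[1]`: `Ω_0[1] = 1` and `Ω_{n+1}[1] = Ω ^ Ω_n[1]`. -/
noncomputable def OmegaTower : ℕ → Ordinal.{0}
  | 0 => 1
  | nn + 1 => Omega1 ^ OmegaTower nn

/-- The Howard–Bachmann ordinal `ϑ(ε_{Ω+1}) = sup_{n<ω} ϑ(Ω_n[1])`. -/
noncomputable def HowardBachmann : Ordinal.{0} := ⨆ nn : ℕ, theta (OmegaTower nn)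

/-!
`ϑ(α)` is the least element of the set of `ζ ∈ P` meeting its two defining conditions, and this
set is never empty: the values `ϑ(β)` for `β < α` form a set, so some `s` bounds them and `k(α)`,
and then `ω ^ (s + 1)` belongs to it. So `ϑ(α)` meets its own defining conditions and lies below every `ζ`
that does. Everything else is read off from these two facts; the one non-immediate case is
`β < α` with `k(β) < ϑ(α)`, where `ϑ(α)` meets the defining conditions of `ϑ(β)`, so that
`ϑ(β) ≤ ϑ(α)`.
-/

section

open Ordinal

def thetaCandidates (α : Ordinal.{0}) : Set Ordinal.{0} :=
  {ζ | AddClosed ζ ∧ kMax α < ζ ∧ ∀ β < α, kMax β < ζ → theta β < ζ}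

theorem theta_eq_sInf_thetaCandidates (α : Ordinal.{0}) : theta α = sInf (thetaCandidates α) := by
  rw [theta, WellFounded.fix_eq]
  rfl

theorem thetaCandidates_nonempty (α : Ordinal.{0}) : (thetaCandidates α).Nonempty := by
  set s := max (kMax α) (⨆ β : Set.Iio α, theta β)
  have hs : s < ω ^ (s + 1) :=
    (Order.lt_add_one_iff.2 le_rfl).trans_le (right_le_opow _ one_lt_omega0)
  refine ⟨ω ^ (s + 1), ⟨s + 1, rfl⟩, (le_max_left _ _).trans_lt hs, fun β hβ _ => ?_⟩
  exact ((Ordinal.le_iSup (fun β : Set.Iio α => theta β) ⟨β, hβ⟩).trans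
    (le_max_right _ _)).trans_lt hs

theorem theta_mem_thetaCandidates (α : Ordinal.{0}) : theta α ∈ thetaCandidates α :=
  theta_eq_sInf_thetaCandidates α ▸ csInf_mem (thetaCandidates_nonempty α)

theorem theta_le_of_mem_thetaCandidates {α ζ : Ordinal.{0}} (h : ζ ∈ thetaCandidates α) :
    theta α ≤ ζ :=
  theta_eq_sInf_thetaCandidates α ▸ csInf_le' h

theorem kMax_lt_theta (α : Ordinal.{0}) : kMax α < theta α :=
  (theta_mem_thetaCandidates α).2.1

theorem theta_lt_theta_of_lt {α β : Ordinal.{0}} (hαβ : α < β) (hk : kMax α < theta β) :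
    theta α < theta β :=
  (theta_mem_thetaCandidates β).2.2 α hαβ hk

theorem theta_le_theta_of_lt {α β : Ordinal.{0}} (hβα : β < α) (hk : kMax β < theta α) :
    theta β ≤ theta α := by
  obtain ⟨hP, -, hθ⟩ := theta_mem_thetaCandidates α
  exact theta_le_of_mem_thetaCandidates ⟨hP, hk, fun γ hγ => hθ γ (hγ.trans hβα)⟩

end

theorem stmt7_general (α β : Ordinal.{0}) :
    theta α < theta β ↔
      ((α < β ∧ kMax α < theta β) ∨ (β < α ∧ theta α ≤ kMax β)) := by
  constructor
  · intro h
    rcases lt_trichotomy α β with hαβ | rfl | hβα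
    · exact .inl ⟨hαβ, (kMax_lt_theta α).trans h⟩
    · exact absurd h (lt_irrefl _)
    · exact .inr ⟨hβα, not_lt.1 fun hk => (theta_le_theta_of_lt hβα hk).not_gt h⟩
  · rintro (⟨hαβ, hk⟩ | ⟨-, hk⟩)
    · exact theta_lt_theta_of_lt hαβ hk
    · exact hk.trans_lt (kMax_lt_theta β)

/-- the basic comparison property of the `ϑ`-function. -/
theorem stmt7 (α β : Ordinal.{0}) (hα : α < epsOmega1) (hβ : β < epsOmega1) :
    theta α < theta β ↔
      ((α < β ∧ kMax α < theta β) ∨ (β < α ∧ theta α ≤ kMax β)) :=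
  stmt7_general α β
end

section
/- For every ordinal α < ε_{Ω+1}, ϑ(α) < Ω; that is, ϑ(α) is a countable ordinal. -/
open Ordinal Cardinal Set

lemma Omega1_eq_omega_one : Omega1 = ω₁ := ord_aleph 1

lemma omega0_le_Omega1 : ω ≤ Omega1 := Omega1_eq_omega_one ▸ omega0_lt_omega_one.le

lemma isSuccLimit_Omega1 : Order.IsSuccLimit Omega1 := isSuccLimit_ord (aleph0_le_aleph 1)

lemma one_lt_Omega1 : 1 < Omega1 := one_lt_omega0.trans_le omega0_le_Omega1

lemma omega0_opow_lt_Omega1 {ξ : Ordinal.{0}} (h : ξ < Omega1) : ω ^ ξ < Omega1 := by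
  rw [Omega1_eq_omega_one] at h ⊢
  exact isPrincipal_opow_omega 1 omega0_lt_omega_one h

lemma sSup_lt_Omega1 {s : Set Ordinal.{0}} (hs : s.Countable) (h : ∀ x ∈ s, x < Omega1) :
    sSup s < Omega1 := by
  have := hs.to_subtype
  rw [sSup_eq_iSup', Omega1_eq_omega_one]
  exact iSup_lt_omega_one fun x => Omega1_eq_omega_one ▸ h x x.2

lemma countable_Iic_of_lt_Omega1 {z : Ordinal.{0}} (hz : z < Omega1) : (Iic z).Countable := by
  rw [← Order.Iio_succ, ← le_aleph0_iff_set_countable, Cardinal.mk_Iio_ordinal,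
    ← lift_aleph0.{1, 0}, Cardinal.lift_le, ← lt_aleph_one_iff, ← lt_ord]
  exact isSuccLimit_Omega1.succ_lt hz

lemma lt_Omega1_opow_self {β : Ordinal.{0}} (h0 : β ≠ 0) (hβ : β < epsOmega1) :
    β < Omega1 ^ β := by
  by_contra! hle
  have hfix : Omega1 ^ β = β := hle.antisymm (right_le_opow β one_lt_Omega1)
  have h1 : 1 < β := by
    refine (Order.one_le_iff_ne_zero.2 h0).lt_of_ne fun h => ?_
    subst h
    exact one_lt_Omega1.not_ge (by simpa using hle)
  have hΩ_lt : Omega1 < β := by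
    simpa [hfix] using (opow_lt_opow_iff_right one_lt_Omega1).2 h1
  have : epsOmega1 ≤ β :=
    nfp_le_fp (isNormal_opow one_lt_omega0).monotone (Order.add_one_le_of_lt hΩ_lt)
      ((opow_le_opow_left β omega0_le_Omega1).trans hfix.le)
  exact this.not_gt hβ

lemma fst_lt_of_mem_CNF {α : Ordinal.{0}} (hα : α < epsOmega1) {p : Ordinal × Ordinal}
    (hp : p ∈ CNF Omega1 α) : p.1 < α := by
  have h0 : α ≠ 0 := by rintro rfl; simp [CNF.zero_right] at hp
  exact (CNF.fst_le_log hp).trans_lt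
    ((lt_opow_iff_log_lt one_lt_Omega1 h0).1 (lt_Omega1_opow_self h0 hα))

lemma KMem.lt_Omega1 {β α : Ordinal.{0}} (h : KMem β α) : β < Omega1 := by
  induction h with
  | zero => exact zero_lt_one.trans one_lt_Omega1
  | coeff hp => exact CNF.snd_lt one_lt_Omega1 hp
  | expo _ _ ih => exact ih

lemma setOf_KMem_subset (α : Ordinal.{0}) :
    {β | KMem β α} ⊆ insert 0 (⋃ p ∈ CNF Omega1 α, insert p.2 {β | KMem β p.1}) := by
  intro β h
  cases h with
  | zero => exact mem_insert _ _
  | coeff hp => exact mem_insert_of_mem _ (mem_biUnion hp (mem_insert _ _))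
  | expo hp h => exact mem_insert_of_mem _ (mem_biUnion hp (mem_insert_of_mem _ h))

lemma finite_setOf_KMem {α : Ordinal.{0}} (hα : α < epsOmega1) : {β | KMem β α}.Finite := by
  induction α using WellFoundedLT.induction with
  | _ α ih =>
    refine (Finite.insert 0 ((CNF Omega1 α).finite_toSet.biUnion fun p hp => ?_)).subset
      (setOf_KMem_subset α)
    have hp : p.1 < α := fst_lt_of_mem_CNF hα hp
    exact (ih p.1 hp (hp.trans hα)).insert p.2

lemma KMem.le_kMax {β α : Ordinal.{0}} (hα : α < epsOmega1) (h : KMem β α) : β ≤ kMax α :=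
  le_csSup (finite_setOf_KMem hα).bddAbove h

lemma kMax_lt_Omega1 {α : Ordinal.{0}} (hα : α < epsOmega1) : kMax α < Omega1 :=
  sSup_lt_Omega1 (finite_setOf_KMem hα).countable fun _ => KMem.lt_Omega1

lemma List.eq_of_map_eq {α β : Type*} {f : α → β} {l l' : List α}
    (hf : ∀ a ∈ l, ∀ b ∈ l', f a = f b → a = b) (h : l.map f = l'.map f) : l = l' := by
  have hlen : l.length = l'.length := by simpa using congrArg List.length h
  refine List.ext_getElem hlen fun i hi hi' =>
    hf _ (List.getElem_mem hi) _ (List.getElem_mem hi') ?_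
  simpa [List.getElem?_eq_getElem hi, List.getElem?_eq_getElem hi'] using congrArg (·[i]?) h

/-- The `else` branch is junk: below `ε_{Ω+1}` the exponents of the normal form of `β` are smaller
than `β` (`cnfCode_eq`). -/
noncomputable def cnfCode (g : Ordinal.{0} → ℕ) : Ordinal.{0} → ℕ :=
  lt_wf.fix fun β IH => Encodable.encode ((CNF Omega1 β).map fun p =>
    (if h : p.1 < β then IH p.1 h else 0, g p.2))

lemma cnfCode_eq (g : Ordinal.{0} → ℕ) {β : Ordinal.{0}} (hβ : β < epsOmega1) :
    cnfCode g β = Encodable.encode ((CNF Omega1 β).map fun p => (cnfCode g p.1, g p.2)) := by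
  rw [cnfCode, WellFounded.fix_eq]
  congr 1
  refine List.map_congr_left fun p hp => ?_
  rw [dif_pos (fst_lt_of_mem_CNF hβ hp)]

lemma injOn_cnfCode {s : Set Ordinal.{0}} {g : Ordinal.{0} → ℕ} (hg : InjOn g s) :
    InjOn (cnfCode g) {β | β < epsOmega1 ∧ ∀ x, KMem x β → x ∈ s} := by
  intro β hβ
  induction β using WellFoundedLT.induction with
  | _ β ih =>
    rintro β' hβ' h
    rw [cnfCode_eq g hβ.1, cnfCode_eq g hβ'.1] at h
    have hCNF : CNF Omega1 β = CNF Omega1 β' := by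
      refine List.eq_of_map_eq (fun p hp q hq hpq => ?_) (Encodable.encode_injective h)
      obtain ⟨hcode, hcoeff⟩ := Prod.mk.inj hpq
      have hpβ := fst_lt_of_mem_CNF hβ.1 hp
      have hqβ' := fst_lt_of_mem_CNF hβ'.1 hq
      refine Prod.ext (ih _ hpβ ⟨hpβ.trans hβ.1, fun x hx => hβ.2 x (.expo hp hx)⟩
        ⟨hqβ'.trans hβ'.1, fun x hx => hβ'.2 x (.expo hq hx)⟩ hcode) ?_
      exact hg (hβ.2 _ (.coeff hp)) (hβ'.2 _ (.coeff hq)) hcoeff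
    rw [← CNF.foldr Omega1 β, ← CNF.foldr Omega1 β', hCNF]

lemma countable_setOf_KMem_subset {s : Set Ordinal.{0}} (hs : s.Countable) :
    {β | β < epsOmega1 ∧ ∀ x, KMem x β → x ∈ s}.Countable := by
  obtain ⟨g, hg⟩ := countable_iff_exists_injOn.1 hs
  exact countable_iff_exists_injOn.2 ⟨cnfCode g, injOn_cnfCode hg⟩

lemma countable_setOf_kMax_le {z : Ordinal.{0}} (hz : z < Omega1) :
    {β | β < epsOmega1 ∧ kMax β ≤ z}.Countable := by
  refine (countable_setOf_KMem_subset (countable_Iic_of_lt_Omega1 hz)).mono ?_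
  rintro β ⟨hβ, hk⟩
  exact ⟨hβ, fun _ hx => (hx.le_kMax hβ).trans hk⟩

lemma exists_addClosed_lt_Omega1_closed {f : Ordinal.{0} → Ordinal.{0}} (hf : Monotone f)
    (hfΩ : ∀ z < Omega1, f z < Omega1) {a : Ordinal.{0}} (ha : a < Omega1) :
    ∃ ζ < Omega1, AddClosed ζ ∧ a < ζ ∧ ∀ z < ζ, f z < ζ := by
  set g : Ordinal.{0} → Ordinal.{0} := fun x => f (ω ^ x) + 1
  have hgΩ : ∀ x < Omega1, g x < Omega1 := fun x hx =>
    isSuccLimit_Omega1.add_one_lt (hfΩ _ (omega0_opow_lt_Omega1 hx))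
  have hξΩ : nfp g (a + 1) < Omega1 := by
    refine nfp_lt_ord ?_ hgΩ (isSuccLimit_Omega1.add_one_lt ha)
    rw [Omega1_eq_omega_one, cof_omega_one]
    exact aleph0_lt_aleph_one
  have hξ_le : nfp g (a + 1) ≤ ω ^ nfp g (a + 1) := right_le_opow _ one_lt_omega0
  refine ⟨ω ^ nfp g (a + 1), omega0_opow_lt_Omega1 hξΩ, ⟨_, rfl⟩,
    (Order.lt_add_one_iff.2 le_rfl).trans_le ((le_nfp g _).trans hξ_le), fun z hz => ?_⟩
  rw [← iSup_iterate_eq_nfp, (isNormal_opow one_lt_omega0).map_iSup Ordinal.bddAbove_of_small] at hz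
  obtain ⟨n, hn⟩ := Ordinal.lt_iSup_iff.1 hz
  calc f z ≤ f (ω ^ g^[n] (a + 1)) := hf hn.le
    _ < g (g^[n] (a + 1)) := Order.lt_add_one_iff.2 le_rfl
    _ = g^[n + 1] (a + 1) := (Function.iterate_succ_apply' g n _).symm
    _ ≤ nfp g (a + 1) := iterate_le_nfp g _ _
    _ ≤ ω ^ nfp g (a + 1) := hξ_le

lemma theta_le {α ζ : Ordinal.{0}} (hζ : AddClosed ζ) (hk : kMax α < ζ)
    (h : ∀ β < α, kMax β < ζ → theta β < ζ) : theta α ≤ ζ := by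
  rw [theta, WellFounded.fix_eq]
  exact csInf_le' ⟨hζ, hk, h⟩

/-- `ϑ(α)` is always a countable ordinal, i.e. `ϑ(α) < Ω`. -/
theorem stmt8 (α : Ordinal.{0}) (hα : α < epsOmega1) : theta α < Omega1 := by
  induction α using WellFoundedLT.induction with
  | _ α ih =>
  have hθ : ∀ β < α, theta β < Omega1 := fun β hβ => ih β hβ (hβ.trans hα)
  let f : Ordinal.{0} → Ordinal.{0} := fun z => sSup (theta '' {β | β < α ∧ kMax β ≤ z})
  have hbdd : ∀ z, BddAbove (theta '' {β | β < α ∧ kMax β ≤ z}) := by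
    refine fun z => ⟨Omega1, ?_⟩
    rintro _ ⟨β, ⟨hβ, -⟩, rfl⟩
    exact (hθ β hβ).le
  have hmono : Monotone f := fun z z' hz =>
    csSup_le_csSup' (hbdd z') (image_mono fun _ hβ => ⟨hβ.1, hβ.2.trans hz⟩)
  have hfΩ : ∀ z < Omega1, f z < Omega1 := by
    refine fun z hz => sSup_lt_Omega1 (Countable.image ?_ theta) ?_
    · refine (countable_setOf_kMax_le hz).mono ?_
      rintro β ⟨hβ, hk⟩
      exact ⟨hβ.trans hα, hk⟩
    · rintro _ ⟨β, ⟨hβ, -⟩, rfl⟩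
      exact hθ β hβ
  obtain ⟨ζ, hζΩ, hζ, hkζ, hfζ⟩ :=
    exists_addClosed_lt_Omega1_closed hmono hfΩ (kMax_lt_Omega1 hα)
  refine (theta_le hζ hkζ fun β hβ hkβ => ?_).trans_lt hζΩ
  exact (le_csSup (hbdd _) (mem_image_of_mem theta ⟨hβ, le_rfl⟩)).trans_lt (hfζ _ hkβ)
end
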